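/- Let T : ℝ^{n_x} → ℝ^{n_z}, T* : ℝ^{n_z} → ℝ^{n_x}, and let T̂ : ℝ^{n_x} → ℝ^{n_z} and T̂* : ℝ^{n_z} → ℝ^{n_x} be Lipschitz with constants ℓ_θ ∈ [0,1) and ℓ_η ∈ [0,1), respectively. Let x ∈ ℝ^{n_x}, z = T(x), and let x̂ ∈ ℝ^{n_x}, ẑ ∈ ℝ^{n_z} satisfy ẑ = T̂(x̂) and x̂ = T̂*(ẑ). Set ξ = ‖T(x) − T̂(x)‖ and ξ* = ‖T*(z) − T̂*(z)‖, and assume x = T*(z). Then ‖x − x̂‖ ≤ (ξ* + ℓ_η·ξ)/(1 − ℓ_θ·ℓ_η). -/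
import Mathlib

/-- If the neural network approximations `T̂` and `T̂*` of the KKL transformations `T`, `T*` are
Lipschitz with constants `ℓ_θ, ℓ_η ∈ [0,1)`, `z = T(x)`, `x = T*(z)`, `ẑ = T̂(x̂)`, `x̂ = T̂*(ẑ)`,
then `‖x - x̂‖ ≤ (ξ* + ℓ_η ξ)/(1 - ℓ_θ ℓ_η)` where `ξ = ‖T(x) - T̂(x)‖` and
`ξ* = ‖T*(z) - T̂*(z)‖`. -/
theorem state_estimation_error_contraction_bound
    (nx nz : ℕ)
    (T That : EuclideanSpace ℝ (Fin nx) → EuclideanSpace ℝ (Fin nz))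
    (Tstar Thatstar : EuclideanSpace ℝ (Fin nz) → EuclideanSpace ℝ (Fin nx))
    (ℓθ ℓη : ℝ) (hℓθ0 : 0 ≤ ℓθ) (hℓθ1 : ℓθ < 1) (hℓη0 : 0 ≤ ℓη) (hℓη1 : ℓη < 1)
    (hThatLip : ∀ a b : EuclideanSpace ℝ (Fin nx), ‖That a - That b‖ ≤ ℓθ * ‖a - b‖)
    (hThatstarLip : ∀ a b : EuclideanSpace ℝ (Fin nz),
      ‖Thatstar a - Thatstar b‖ ≤ ℓη * ‖a - b‖)
    (x xh : EuclideanSpace ℝ (Fin nx)) (z zh : EuclideanSpace ℝ (Fin nz))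
    (hz : z = T x) (hzh : zh = That xh) (hxh : xh = Thatstar zh) (hx : x = Tstar z)
    (ξ ξstar : ℝ) (hξ : ξ = ‖T x - That x‖) (hξstar : ξstar = ‖Tstar z - Thatstar z‖) :
    ‖x - xh‖ ≤ (ξstar + ℓη * ξ) / (1 - ℓθ * ℓη) := by
  have hzz : ‖z - zh‖ ≤ ξ + ℓθ * ‖x - xh‖ := by
    calc ‖z - zh‖ = ‖(T x - That x) + (That x - That xh)‖ := by rw [hz, hzh]; abel_nf
      _ ≤ ‖T x - That x‖ + ‖That x - That xh‖ := norm_add_le _ _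
      _ ≤ ξ + ℓθ * ‖x - xh‖ := by
          rw [hξ]; exact add_le_add le_rfl (hThatLip x xh)
  have hxx : ‖x - xh‖ ≤ ξstar + ℓη * ‖z - zh‖ := by
    calc ‖x - xh‖ = ‖(Tstar z - Thatstar z) + (Thatstar z - Thatstar zh)‖ := by
          rw [hx, hxh]; abel_nf
      _ ≤ ‖Tstar z - Thatstar z‖ + ‖Thatstar z - Thatstar zh‖ := norm_add_le _ _
      _ ≤ ξstar + ℓη * ‖z - zh‖ := by
          rw [hξstar]; exact add_le_add le_rfl (hThatstarLip z zh)
  have key : ‖x - xh‖ ≤ ξstar + ℓη * (ξ + ℓθ * ‖x - xh‖) :=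
    hxx.trans (by nlinarith [hzz])
  have hden : 0 < 1 - ℓθ * ℓη := by nlinarith
  rw [le_div_iff₀ hden]
  nlinarith [key]
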